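/- Let g : ℝ → ℝ be differentiable with g'(x) > 0 for all x (in particular g strictly increasing), odd, and satisfying g(x + 4K) = g(x) + π for some K > 0. Fix reals γ₁, …, γ₄ ∈ [0, 2K] and suppose γ ∈ ℝ satisfies Σ_{k=1}^{4} (g(γ + γ_k) + g(γ − γ_k)) = 2π. Then γ ∈ [0, 2K]. -/
import Mathlib


open Real

/-- A-priori bound for hyperbolic ring patterns: if `g` is differentiable with
positive derivative, odd, and quasi-periodic with `g(x + 4K) = g(x) + π`, and
`γ₁, …, γ₄ ∈ [0, 2K]`, then any real `γ` with
`Σ_{k=1}^{4} (g(γ + γ_k) + g(γ − γ_k)) = 2π` satisfies `γ ∈ [0, 2K]`. -/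
theorem hyperbolic_apriori_bound (K : ℝ) (hK : 0 < K)
    (g g' : ℝ → ℝ)
    (hderiv : ∀ x, HasDerivAt g (g' x) x)
    (hpos : ∀ x, 0 < g' x)
    (hodd : ∀ x, g (-x) = -g x)
    (hquasi : ∀ x, g (x + 4 * K) = g x + π)
    (γk : Fin 4 → ℝ) (hγk : ∀ k, γk k ∈ Set.Icc 0 (2 * K))
    (γ : ℝ)
    (hsum : ∑ k : Fin 4, (g (γ + γk k) + g (γ - γk k)) = 2 * π) :
    γ ∈ Set.Icc 0 (2 * K) := by
  have hmono : StrictMono g := by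
    apply strictMono_of_deriv_pos
    intro x
    rw [(hderiv x).deriv]
    exact hpos x
  have hpair : ∀ t : ℝ, g (2 * K + t) + g (2 * K - t) = π := by
    intro t
    have h1 : g (2 * K + t) = g (t - 2 * K) + π := by
      have := hquasi (t - 2 * K)
      rw [show t - 2 * K + 4 * K = 2 * K + t by ring] at this
      exact this
    have h2 : g (t - 2 * K) = -g (2 * K - t) := by
      rw [show t - 2 * K = -(2 * K - t) by ring, hodd]
    rw [h1, h2]; ring
  constructor
  · by_contra h
    push_neg at h
    have hlt : ∀ k : Fin 4, g (γ + γk k) + g (γ - γk k) < 0 := by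
      intro k
      have h0 : g (γk k) + g (-(γk k)) = 0 := by rw [hodd]; ring
      have ha : g (γ + γk k) < g (γk k) := hmono (by linarith)
      have hb : g (γ - γk k) < g (-(γk k)) := hmono (by linarith)
      linarith
    have : ∑ k : Fin 4, (g (γ + γk k) + g (γ - γk k)) < 0 :=
      Finset.sum_neg (fun k _ => hlt k) ⟨0, Finset.mem_univ 0⟩
    have := Real.pi_pos
    linarith
  · by_contra h
    push_neg at h
    have hlt : ∀ k : Fin 4, π < g (γ + γk k) + g (γ - γk k) := by
      intro k
      have ha : g (2 * K + γk k) < g (γ + γk k) := hmono (by linarith)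
      have hb : g (2 * K - γk k) < g (γ - γk k) := hmono (by linarith)
      have := hpair (γk k)
      linarith
    have hsum4 : (4 : ℝ) * π < ∑ k : Fin 4, (g (γ + γk k) + g (γ - γk k)) := by
      have := Finset.sum_lt_sum_of_nonempty (s := (Finset.univ : Finset (Fin 4)))
        ⟨0, Finset.mem_univ 0⟩ (f := fun _ => π) (fun k _ => hlt k)
      simpa [Finset.sum_const, Finset.card_univ, mul_comm] using this
    have := Real.pi_pos
    linarith
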